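/- arXiv:2008.07368 — 3 statements merged into one kernel-verified Lean document; each statement's English description precedes it below -/
import Mathlib

section
/- On the set H^v of functions u ∈ L^1([0,T]; B) that are absolutely continuous with u(0)=0, Bochner-integrable derivative, take values in the common domain B_0 of G_v, and satisfy G_v u ∈ L^1([0,T]; B), the generator of the semigroup U_s^v u(t) = T_v(s)u(t−s)1_{[s≤t]} coincides with −∂_t + G_v, i.e. H^v is contained in the domain of the generator and the generator restricted to H^v equals u ↦ −u′ + G_v u. -/
/-!
Extend `u'` by zero outside `[0,T]` to `g ∈ L¹(ℝ)`. On `[0,T]` we have `u = ∫₀ᵗ g` and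
`Γ_h u (t) = ∫₀^{t-h} g`, so `Γ_h u - u = -∫_{t-h}^t g`, and since `T_v(h)` is a contraction,
`h⁻¹(T_v(h) Γ_h u - u) + u' - G_v u`
`  = T_v(h) (h⁻¹(Γ_h u - u) + u') - (T_v(h) u' - u') + (h⁻¹(T_v(h) u - u) - G_v u)`
reduces the claim to three convergences in `L¹`. The first holds because
`h⁻¹ ∫_{t-h}^t g - g t` is the average over `r ∈ (0,h]` of `g (t - r) - g t`, so by Tonelli its
`L¹` norm is at most the average of the `L¹` norms of `g (· - r) - g`, which tend to `0`
(continuity of translation in `L¹`). The other two follow from dominated convergence; for the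
last one the domination is `‖T_v(h) x - x‖ ≤ h ‖G_v x‖`, the mean value inequality for the right
derivative `T_v(s) G_v x` of `s ↦ T_v(s) x`.
-/

open MeasureTheory Filter Set Topology

/-- The killed left-translation operator `Γ_s`. -/
noncomputable def killedShift {B : Type*} [NormedAddCommGroup B] (s : ℝ) (u : ℝ → B) : ℝ → B :=
  fun t => if s ≤ t then u (t - s) else 0

theorem tendsto_integral_norm_of_tendsto_lintegral_enorm {α ι E : Type*} [MeasurableSpace α]
    {μ : Measure α} [NormedAddCommGroup E] {l : Filter ι} {F : ι → α → E}
    (hF : Tendsto (fun i => ∫⁻ a, ‖F i a‖ₑ ∂μ) l (𝓝 0)) :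
    Tendsto (fun i => ∫ a, ‖F i a‖ ∂μ) l (𝓝 0) := by
  refine squeeze_zero_norm (fun i => ?_)
    (by simpa using (ENNReal.tendsto_toReal ENNReal.zero_ne_top).comp hF)
  simpa [ofReal_norm] using norm_integral_le_lintegral_norm (μ := μ) fun a => ‖F i a‖

theorem tendsto_integral_norm_sub_of_norm_le {α ι E : Type*} [MeasurableSpace α] {μ : Measure α}
    [NormedAddCommGroup E] {l : Filter ι} [l.IsCountablyGenerated] {F : ι → α → E} {f : α → E}
    (hf : Integrable f μ) (hF_meas : ∀ᶠ i in l, AEStronglyMeasurable (F i) μ)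
    (h_bound : ∀ᶠ i in l, ∀ᵐ a ∂μ, ‖F i a‖ ≤ ‖f a‖)
    (h_lim : ∀ᵐ a ∂μ, Tendsto (fun i => F i a) l (𝓝 (f a))) :
    Tendsto (fun i => ∫ a, ‖F i a - f a‖ ∂μ) l (𝓝 0) := by
  have hdom : ∀ᶠ i in l, ∀ᵐ a ∂μ, ‖‖F i a - f a‖‖ ≤ 2 * ‖f a‖ :=
    h_bound.mono fun i hi => hi.mono fun a ha => by
      rw [norm_norm, two_mul]
      exact (norm_sub_le _ _).trans (add_le_add_left ha _)
  simpa using tendsto_integral_filter_of_dominated_convergence (fun a => 2 * ‖f a‖)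
    (hF_meas.mono fun i hi => (hi.sub hf.1).norm) hdom (hf.norm.const_mul 2)
    (h_lim.mono fun a ha => (tendsto_iff_norm_sub_tendsto_zero.1 ha))

theorem tendsto_integral_norm_of_norm_le_add_add {α ι E : Type*} [MeasurableSpace α]
    {μ : Measure α} [NormedAddCommGroup E] {l : Filter ι} {F : ι → α → E} {p q r : ι → α → ℝ}
    (hp : ∀ᶠ i in l, Integrable (p i) μ) (hq : ∀ᶠ i in l, Integrable (q i) μ)
    (hr : ∀ᶠ i in l, Integrable (r i) μ)
    (hF : ∀ᶠ i in l, ∀ᵐ a ∂μ, ‖F i a‖ ≤ p i a + q i a + r i a)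
    (hp_lim : Tendsto (fun i => ∫ a, p i a ∂μ) l (𝓝 0))
    (hq_lim : Tendsto (fun i => ∫ a, q i a ∂μ) l (𝓝 0))
    (hr_lim : Tendsto (fun i => ∫ a, r i a ∂μ) l (𝓝 0)) :
    Tendsto (fun i => ∫ a, ‖F i a‖ ∂μ) l (𝓝 0) := by
  refine squeeze_zero' (.of_forall fun i => integral_nonneg fun a => norm_nonneg _) ?_
    (by simpa using (hp_lim.add hq_lim).add hr_lim)
  filter_upwards [hp, hq, hr, hF] with i hpi hqi hri hFi
  calc ∫ a, ‖F i a‖ ∂μ ≤ ∫ a, (p i a + q i a + r i a) ∂μ :=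
        integral_mono_of_nonneg (.of_forall fun a => norm_nonneg _) ((hpi.add hqi).add hri) hFi
    _ = (∫ a, p i a ∂μ) + (∫ a, q i a ∂μ) + ∫ a, r i a ∂μ := by
        rw [integral_add (f := fun a => p i a + q i a) (hpi.add hqi) hri, integral_add hpi hqi]

section Translation

variable {E : Type*} [NormedAddCommGroup E]

theorem tendsto_integral_norm_comp_sub_sub_of_hasCompactSupport {k : ℝ → E}
    (hk : Continuous k) (hk_supp : HasCompactSupport k) :
    Tendsto (fun r => ∫ t, ‖k (t - r) - k t‖) (𝓝 0) (𝓝 0) := by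
  set K := Metric.cthickening 1 (tsupport k)
  have hcont : Continuous fun r => ∫ t in K, ‖k (t - r) - k t‖ :=
    continuous_parametric_integral_of_continuous (by fun_prop) hk_supp.isCompact.cthickening
  have hK : ∀ᶠ r in 𝓝 (0 : ℝ), ∫ t in K, ‖k (t - r) - k t‖ = ∫ t, ‖k (t - r) - k t‖ := by
    filter_upwards [Metric.closedBall_mem_nhds (0 : ℝ) one_pos] with r hr
    refine setIntegral_eq_integral_of_forall_compl_eq_zero fun t ht => ?_
    have ht₁ : t ∉ tsupport k := fun hmem => ht (Metric.self_subset_cthickening _ hmem)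
    have ht₂ : t - r ∉ tsupport k := fun hmem => ht <|
      Metric.mem_cthickening_of_dist_le t (t - r) 1 _ hmem (by simpa [Real.dist_eq] using hr)
    simp [image_eq_zero_of_notMem_tsupport ht₁, image_eq_zero_of_notMem_tsupport ht₂]
  simpa using (hcont.tendsto 0).congr' hK

theorem tendsto_integral_norm_comp_sub_sub [NormedSpace ℝ E] {g : ℝ → E} (hg : Integrable g) :
    Tendsto (fun r => ∫ t, ‖g (t - r) - g t‖) (𝓝 0) (𝓝 0) := by
  refine Metric.tendsto_nhds.2 fun ε hε => ?_
  obtain ⟨k, hk_supp, hgk, hk, hk_int⟩ :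
      ∃ k : ℝ → E, HasCompactSupport k ∧ ∫ t, ‖g t - k t‖ ≤ ε / 3 ∧ Continuous k ∧ Integrable k :=
    hg.exists_hasCompactSupport_integral_sub_le (show 0 < ε / 3 by positivity)
  filter_upwards [(tendsto_order.1 (tendsto_integral_norm_comp_sub_sub_of_hasCompactSupport hk
    hk_supp)).2 (ε / 3) (by positivity)] with r hr
  rw [Real.dist_eq, sub_zero, abs_of_nonneg (integral_nonneg fun _ => norm_nonneg _)]
  have hgk_int : Integrable fun t => ‖g t - k t‖ := (hg.sub hk_int).norm
  have hgk_int' : Integrable fun t => ‖g (t - r) - k (t - r)‖ := hgk_int.comp_sub_right r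
  have hk_int' : Integrable fun t => ‖k (t - r) - k t‖ :=
    ((hk_int.comp_sub_right r).sub hk_int).norm
  calc ∫ t, ‖g (t - r) - g t‖
      ≤ ∫ t, (‖g (t - r) - k (t - r)‖ + ‖k (t - r) - k t‖ + ‖g t - k t‖) := by
        refine integral_mono_of_nonneg (.of_forall fun _ => norm_nonneg _)
          ((hgk_int'.add hk_int').add hgk_int) (.of_forall fun t => ?_)
        simpa only [dist_eq_norm, norm_sub_rev (k t)] using
          dist_triangle4 (g (t - r)) (k (t - r)) (k t) (g t)
    _ = (∫ t, ‖g t - k t‖) + (∫ t, ‖k (t - r) - k t‖) + ∫ t, ‖g t - k t‖ := by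
        rw [integral_add (f := fun t => _ + _) (hgk_int'.add hk_int') hgk_int,
          integral_add hgk_int' hk_int',
          integral_sub_right_eq_self (fun t => ‖g t - k t‖) r]
    _ < ε := by linarith

end Translation

section Primitive

variable {E : Type*} [NormedAddCommGroup E] [NormedSpace ℝ E] {g : ℝ → E}

theorem MeasureTheory.Integrable.continuous_intervalIntegral_sub_left (hg : Integrable g) (h : ℝ) :
    Continuous fun t => ∫ s in (t - h)..t, g s := by
  have hprim := intervalIntegral.continuous_primitive (fun _ _ => hg.intervalIntegrable) 0
  refine (hprim.sub (hprim.comp (continuous_sub_right h))).congr fun t => ?_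
  exact intervalIntegral.integral_interval_sub_left hg.intervalIntegrable hg.intervalIntegrable

variable [CompleteSpace E]

theorem enorm_inv_smul_intervalIntegral_sub_le (hg : Integrable g) {h : ℝ} (hh : 0 < h) (t : ℝ) :
    ‖h⁻¹ • (∫ s in (t - h)..t, g s) - g t‖ₑ
      ≤ ENNReal.ofReal h⁻¹ * ∫⁻ r in Ioc 0 h, ‖g (t - r) - g t‖ₑ := by
  have hmean :
      h⁻¹ • (∫ s in (t - h)..t, g s) - g t = h⁻¹ • ∫ r in Ioc 0 h, (g (t - r) - g t) := by
    rw [integral_sub (hg.comp_sub_left t).integrableOn (integrableOn_const measure_Ioc_lt_top.ne),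
      integral_const, measureReal_restrict_apply_univ, Real.volume_real_Ioc_of_le hh.le,
      ← intervalIntegral.integral_of_le hh.le, intervalIntegral.integral_comp_sub_left (g ·) t,
      sub_zero, smul_sub, sub_zero, smul_smul, inv_mul_cancel₀ hh.ne', one_smul]
  rw [hmean, enorm_smul, Real.enorm_of_nonneg (inv_nonneg.2 hh.le)]
  gcongr
  exact enorm_integral_le_lintegral_enorm _

theorem tendsto_lintegral_enorm_inv_smul_intervalIntegral_sub (hg : Integrable g) :
    Tendsto (fun h => ∫⁻ t, ‖h⁻¹ • (∫ s in (t - h)..t, g s) - g t‖ₑ) (𝓝[>] 0) (𝓝 0) := by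
  have htransl : Tendsto (fun r => ∫⁻ t, ‖g (t - r) - g t‖ₑ) (𝓝 0) (𝓝 0) := by
    convert ENNReal.tendsto_ofReal (tendsto_integral_norm_comp_sub_sub hg) using 1
    · ext r
      exact (ofReal_integral_norm_eq_lintegral_enorm ((hg.comp_sub_right r).sub hg)).symm
    · rw [ENNReal.ofReal_zero]
  refine ENNReal.tendsto_nhds_zero.2 fun ε hε => ?_
  obtain ⟨δ, hδ, hδε⟩ := Metric.eventually_nhds_iff.1 (ENNReal.tendsto_nhds_zero.1 htransl ε hε)
  filter_upwards [Ioo_mem_nhdsGT hδ] with h ⟨hh, hhδ⟩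
  have hmeas : AEMeasurable (Function.uncurry fun t r => ‖g (t - r) - g t‖ₑ)
      (volume.prod (volume.restrict (Ioc 0 h))) :=
    ((hg.1.comp_quasiMeasurePreserving (quasiMeasurePreserving_sub _ _)).sub
      (hg.1.comp_quasiMeasurePreserving Measure.quasiMeasurePreserving_fst)).enorm
  calc ∫⁻ t, ‖h⁻¹ • (∫ s in (t - h)..t, g s) - g t‖ₑ
      ≤ ∫⁻ t, ENNReal.ofReal h⁻¹ * ∫⁻ r in Ioc 0 h, ‖g (t - r) - g t‖ₑ :=
        lintegral_mono fun t => enorm_inv_smul_intervalIntegral_sub_le hg hh t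
    _ = ENNReal.ofReal h⁻¹ * ∫⁻ r in Ioc 0 h, ∫⁻ t, ‖g (t - r) - g t‖ₑ := by
        rw [lintegral_const_mul' _ _ ENNReal.ofReal_ne_top, lintegral_lintegral_swap hmeas]
    _ ≤ ENNReal.ofReal h⁻¹ * ∫⁻ _ in Ioc 0 h, ε := by
        gcongr _ * ?_
        refine setLIntegral_mono measurable_const fun r hr => hδε ?_
        rw [Real.dist_eq, sub_zero, abs_of_pos hr.1]
        exact hr.2.trans_lt hhδ
    _ = ε := by
        rw [setLIntegral_const, Real.volume_Ioc, sub_zero, mul_comm ε, ← mul_assoc,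
          ← ENNReal.ofReal_mul (inv_nonneg.2 hh.le), inv_mul_cancel₀ hh.ne', ENNReal.ofReal_one,
          one_mul]

theorem tendsto_setIntegral_norm_inv_smul_intervalIntegral_sub (hg : Integrable g) (s : Set ℝ) :
    Tendsto (fun h => ∫ t in s, ‖h⁻¹ • (∫ x in (t - h)..t, g x) - g t‖) (𝓝[>] 0) (𝓝 0) :=
  tendsto_integral_norm_of_tendsto_lintegral_enorm <|
    tendsto_of_tendsto_of_tendsto_of_le_of_le tendsto_const_nhds
      (tendsto_lintegral_enorm_inv_smul_intervalIntegral_sub hg) (fun _ => bot_le)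
      (fun _ => setLIntegral_le_lintegral _ _)

end Primitive

section ContractionSemigroup

variable {E : Type*} [NormedAddCommGroup E] [NormedSpace ℝ E] {S : ℝ → E →L[ℝ] E}

theorem hasDerivWithinAt_Ici_of_tendsto_slope (hS_add : ∀ s t, S (s + t) = (S s).comp (S t))
    {x y : E} (hx : Tendsto (fun h : ℝ => h⁻¹ • (S h x - x)) (𝓝[>] 0) (𝓝 y)) (s : ℝ) :
    HasDerivWithinAt (fun r => S r x) (S s y) (Ici s) s := by
  rw [← hasDerivWithinAt_Ioi_iff_Ici, hasDerivWithinAt_iff_tendsto_slope' self_notMem_Ioi,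
    show 𝓝[>] s = map (s + ·) (𝓝[>] 0) by simp, tendsto_map'_iff]
  refine (((S s).continuous.tendsto y).comp hx).congr fun h => ?_
  simp [slope_def_module, hS_add]

theorem norm_inv_smul_apply_sub_le (hS_zero : S 0 = ContinuousLinearMap.id ℝ E)
    (hS_add : ∀ s t, S (s + t) = (S s).comp (S t)) (hS_contr : ∀ t x, ‖S t x‖ ≤ ‖x‖)
    {x y : E} (hS_cont : Continuous fun t => S t x)
    (hx : Tendsto (fun h : ℝ => h⁻¹ • (S h x - x)) (𝓝[>] 0) (𝓝 y)) {h : ℝ} (hh : 0 < h) :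
    ‖h⁻¹ • (S h x - x)‖ ≤ ‖y‖ := by
  have hmvt := norm_image_sub_le_of_norm_deriv_right_le_segment hS_cont.continuousOn
    (fun r _ => hasDerivWithinAt_Ici_of_tendsto_slope hS_add hx r) (fun r _ => hS_contr r y) h
    ⟨hh.le, le_rfl⟩
  rw [hS_zero, ContinuousLinearMap.id_apply, sub_zero] at hmvt
  rw [norm_smul, norm_inv, Real.norm_of_nonneg hh.le, inv_mul_le_iff₀ hh, mul_comm]
  exact hmvt

theorem tendsto_integral_norm_apply_sub {α : Type*} [MeasurableSpace α] {μ : Measure α}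
    (hS_zero : S 0 = ContinuousLinearMap.id ℝ E) (hS_contr : ∀ t x, ‖S t x‖ ≤ ‖x‖)
    (hS_cont : ∀ x, Continuous fun t => S t x) {f : α → E} (hf : Integrable f μ) :
    Tendsto (fun h => ∫ a, ‖S h (f a) - f a‖ ∂μ) (𝓝 0) (𝓝 0) :=
  tendsto_integral_norm_sub_of_norm_le hf
    (.of_forall fun h => (S h).continuous.comp_aestronglyMeasurable hf.1)
    (.of_forall fun h => .of_forall fun a => hS_contr h _)
    (.of_forall fun a => by simpa [hS_zero] using (hS_cont (f a)).tendsto 0)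

theorem tendsto_integral_norm_inv_smul_apply_sub_sub {α : Type*} [MeasurableSpace α]
    {μ : Measure α} (hS_zero : S 0 = ContinuousLinearMap.id ℝ E)
    (hS_add : ∀ s t, S (s + t) = (S s).comp (S t)) (hS_contr : ∀ t x, ‖S t x‖ ≤ ‖x‖)
    (hS_cont : ∀ x, Continuous fun t => S t x) {f φ : α → E} (hf : AEStronglyMeasurable f μ)
    (hφ : Integrable φ μ)
    (hf_gen : ∀ a, Tendsto (fun h : ℝ => h⁻¹ • (S h (f a) - f a)) (𝓝[>] 0) (𝓝 (φ a))) :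
    Tendsto (fun h => ∫ a, ‖h⁻¹ • (S h (f a) - f a) - φ a‖ ∂μ) (𝓝[>] 0) (𝓝 0) :=
  tendsto_integral_norm_sub_of_norm_le hφ
    (.of_forall fun h => (((S h).continuous.comp_aestronglyMeasurable hf).sub hf).const_smul h⁻¹)
    (eventually_mem_nhdsWithin.mono fun _ hh => .of_forall fun a =>
      norm_inv_smul_apply_sub_le hS_zero hS_add hS_contr (hS_cont _) (hf_gen a) hh)
    (.of_forall hf_gen)

theorem norm_smul_apply_sub_sub_le (L : E →L[ℝ] E) (hL : ∀ x, ‖L x‖ ≤ ‖x‖) (c : ℝ)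
    (a b b' y : E) :
    ‖c • (L a - b) - (-b' + y)‖ ≤ ‖c • (a - b) + b'‖ + ‖L b' - b'‖ + ‖c • (L b - b) - y‖ := by
  have hdecomp : c • (L a - b) - (-b' + y)
      = L (c • (a - b) + b') - (L b' - b') + (c • (L b - b) - y) := by
    simp only [map_add, map_smul, map_sub]
    module
  rw [hdecomp]
  calc ‖L (c • (a - b) + b') - (L b' - b') + (c • (L b - b) - y)‖
      ≤ ‖L (c • (a - b) + b')‖ + ‖L b' - b'‖ + ‖c • (L b - b) - y‖ := by
        grw [norm_add_le, norm_sub_le]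
    _ ≤ ‖c • (a - b) + b'‖ + ‖L b' - b'‖ + ‖c • (L b - b) - y‖ := by grw [hL]

end ContractionSemigroup

theorem killedShift_sub_eq_neg_intervalIntegral {B : Type*} [NormedAddCommGroup B]
    [NormedSpace ℝ B] {u u' : ℝ → B} {T : ℝ} (hu' : IntegrableOn u' (Icc 0 T))
    (hu : ∀ t ∈ Icc (0 : ℝ) T, u t = ∫ s in (0 : ℝ)..t, u' s) {h t : ℝ} (hh : 0 ≤ h)
    (ht : t ∈ Icc 0 T) :
    killedShift h u t - u t = -∫ s in (t - h)..t, (Icc 0 T).indicator u' s := by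
  set g := (Icc (0 : ℝ) T).indicator u'
  have hg : Integrable g := (integrable_indicator_iff measurableSet_Icc).2 hu'
  have hu_eq : ∀ t ∈ Icc (0 : ℝ) T, u t = ∫ s in (0 : ℝ)..t, g s := fun t ht =>
    (hu t ht).trans <| intervalIntegral.integral_congr fun s hs => by
      rw [uIcc_of_le ht.1] at hs
      exact (indicator_of_mem (show s ∈ Icc 0 T from ⟨hs.1, hs.2.trans ht.2⟩) u').symm
  have hneg : ∀ t ≤ 0, ∫ s in (0 : ℝ)..t, g s = 0 := fun t ht => by
    rw [intervalIntegral.integral_congr_ae (g := fun _ => (0 : B)) ?_,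
      intervalIntegral.integral_zero]
    filter_upwards [Measure.ae_ne volume 0] with s hs0 hs
    rw [uIoc_of_ge ht] at hs
    exact indicator_of_notMem (fun hs' => hs0 (le_antisymm hs.2 hs'.1)) u'
  have hshift : killedShift h u t = ∫ s in (0 : ℝ)..(t - h), g s := by
    by_cases hht : h ≤ t
    · rw [killedShift, if_pos hht, hu_eq (t - h) ⟨sub_nonneg.2 hht, by linarith [ht.2]⟩]
    · rw [killedShift, if_neg hht, hneg _ (by linarith)]
  rw [hshift, hu_eq t ht, intervalIntegral.integral_interval_sub_left hg.intervalIntegrable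
    hg.intervalIntegrable, intervalIntegral.integral_symm]

theorem generator_of_composed_semigroup_on_H_general
    {B : Type*} [NormedAddCommGroup B] [NormedSpace ℝ B] [CompleteSpace B]
    (Tv : ℝ → B →L[ℝ] B) (G : B → B) (B0 : Set B)
    (hTv0 : Tv 0 = ContinuousLinearMap.id ℝ B)
    (hTvadd : ∀ s t : ℝ, Tv (s + t) = (Tv s).comp (Tv t))
    (hTvcontr : ∀ (s : ℝ) (x : B), ‖Tv s x‖ ≤ ‖x‖)
    (hTvcont : ∀ x : B, Continuous fun s : ℝ => Tv s x)
    (hgen : ∀ x ∈ B0,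
      Tendsto (fun h : ℝ => h⁻¹ • (Tv h x - x)) (nhdsWithin 0 (Set.Ioi 0)) (nhds (G x)))
    (T : ℝ)
    (u u' : ℝ → B)
    (huint : IntegrableOn u (Set.Icc 0 T) volume)
    (hu'int : IntegrableOn u' (Set.Icc 0 T) volume)
    (hurepr : ∀ t ∈ Set.Icc (0:ℝ) T, u t = ∫ s in (0:ℝ)..t, u' s)
    (huB0 : ∀ t : ℝ, u t ∈ B0)
    (hGuint : IntegrableOn (fun t => G (u t)) (Set.Icc 0 T) volume) :
    Tendsto (fun h : ℝ =>
        ∫ t in Set.Icc (0:ℝ) T,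
          ‖h⁻¹ • (Tv h (killedShift h u t) - u t) - (-u' t + G (u t))‖)
      (nhdsWithin 0 (Set.Ioi 0)) (nhds 0) := by
  set g := (Icc (0 : ℝ) T).indicator u' with hg_def
  have hg : Integrable g := (integrable_indicator_iff measurableSet_Icc).2 hu'int
  refine tendsto_integral_norm_of_norm_le_add_add
    (.of_forall fun h => (((hg.continuous_intervalIntegral_sub_left h).const_smul h⁻¹
      |>.integrableOn_Icc).sub hg.integrableOn).norm)
    (.of_forall fun h => (((Tv h).integrable_comp hu'int).sub hu'int).norm)
    (.of_forall fun h => (((((Tv h).integrable_comp huint).sub huint).smul h⁻¹).sub hGuint).norm)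
    ?_ (tendsto_setIntegral_norm_inv_smul_intervalIntegral_sub hg _)
    ((tendsto_integral_norm_apply_sub hTv0 hTvcontr hTvcont hu'int).mono_left nhdsWithin_le_nhds)
    (tendsto_integral_norm_inv_smul_apply_sub_sub hTv0 hTvadd hTvcontr hTvcont huint.1 hGuint
      fun t => hgen _ (huB0 t))
  filter_upwards [self_mem_nhdsWithin] with h (hh : 0 < h)
  filter_upwards [ae_restrict_mem measurableSet_Icc] with t ht
  have hA : ‖h⁻¹ • (killedShift h u t - u t) + u' t‖
      = ‖h⁻¹ • (∫ s in (t - h)..t, g s) - g t‖ := by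
    rw [killedShift_sub_eq_neg_intervalIntegral hu'int hurepr hh.le ht, ← hg_def,
      show g t = u' t from indicator_of_mem ht u', smul_neg, ← norm_neg]
    congr 1
    abel
  exact hA ▸ norm_smul_apply_sub_sub_le (Tv h) (hTvcontr h) _ _ _ _ _

/-- On the set `H^v` of functions `u ∈ L¹([0,T]; B)` that are absolutely continuous with
`u(0) = 0` and Bochner-integrable derivative `u'`, take values in the domain `B₀` of the
generator `G_v` of the strongly continuous contraction group `(T_v(t))_{t ∈ ℝ}`, and satisfy
`G_v u ∈ L¹([0,T]; B)`, the generator of the semigroup `U_s^v u(t) = T_v(s) u(t-s) 1_{[s≤t]}`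
coincides with `-∂_t + G_v`: the difference quotients converge in `L¹([0,T]; B)` to
`-u' + G_v u`. -/
theorem generator_of_composed_semigroup_on_H
    {B : Type*} [NormedAddCommGroup B] [NormedSpace ℝ B] [CompleteSpace B]
    (Tv : ℝ → B →L[ℝ] B) (G : B → B) (B0 : Set B)
    (hTv0 : Tv 0 = ContinuousLinearMap.id ℝ B)
    (hTvadd : ∀ s t : ℝ, Tv (s + t) = (Tv s).comp (Tv t))
    (hTvcontr : ∀ (s : ℝ) (x : B), ‖Tv s x‖ ≤ ‖x‖)
    (hTvcont : ∀ x : B, Continuous fun s : ℝ => Tv s x)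
    (hgen : ∀ x ∈ B0,
      Tendsto (fun h : ℝ => h⁻¹ • (Tv h x - x)) (nhdsWithin 0 (Set.Ioi 0)) (nhds (G x)))
    (T : ℝ) (hT : 0 < T)
    (u u' : ℝ → B)
    (huint : IntegrableOn u (Set.Icc 0 T) volume)
    (hu'int : IntegrableOn u' (Set.Icc 0 T) volume)
    (hu0 : u 0 = 0)
    (hurepr : ∀ t ∈ Set.Icc (0:ℝ) T, u t = ∫ s in (0:ℝ)..t, u' s)
    (huB0 : ∀ t : ℝ, u t ∈ B0)
    (hGuint : IntegrableOn (fun t => G (u t)) (Set.Icc 0 T) volume) :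
    Tendsto (fun h : ℝ =>
        ∫ t in Set.Icc (0:ℝ) T,
          ‖h⁻¹ • (Tv h (killedShift h u t) - u t) - (-u' t + G (u t))‖)
      (nhdsWithin 0 (Set.Ioi 0)) (nhds 0) :=
  generator_of_composed_semigroup_on_H_general Tv G B0 hTv0 hTvadd hTvcontr hTvcont hgen T u u'
    huint hu'int hurepr huB0 hGuint
end

section
/- The two-parameter family of operators D^− := f(∂_t − G) and D^+ := f(∂_t + G), defined on H ∩ D via D^∓φ(t) = ∫_0^∞ (φ(t) − T(±s)φ(t−s)1_{[s<t]} − T(±t)φ(0)1_{[s≥t]}) ν(ds) for a strongly continuous contraction group T(t) with generator G, commute: D^−D^+ φ = D^+D^− φ for all φ in H ∩ D, where H requires φ(0) = 0. -/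
open MeasureTheory Filter

/-- The operator `f(∂_t - εG)` on `B`-valued functions of time, defined through Phillips'
formula: `Dop ε φ (t) = ∫_0^∞ (φ(t) - T(εs)φ(t-s) 1_{[s<t]} - T(εt)φ(0) 1_{[s≥t]}) ν(ds)`,
where `T` is a group with generator `G` and `ν` is the Lévy measure of the Bernstein
function `f`.  For `ε = 1` this is `D⁻ = f(∂_t - G)`; for `ε = -1` it is `D⁺ = f(∂_t + G)`. -/
noncomputable def Dop {B : Type*} [NormedAddCommGroup B] [NormedSpace ℝ B]
    (Tg : ℝ → B →L[ℝ] B) (ν : Measure ℝ) (ε : ℝ) (φ : ℝ → B) (t : ℝ) : B :=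
  ∫ s in Set.Ioi (0:ℝ), (φ t - if s < t then Tg (ε * s) (φ (t - s)) else Tg (ε * t) (φ 0)) ∂ν

/-- The common kernel appearing in both iterated integrals. -/
noncomputable def Fker {B : Type*} [NormedAddCommGroup B] [NormedSpace ℝ B]
    (Tg : ℝ → B →L[ℝ] B) (φ : ℝ → B) (t s r : ℝ) : B :=
  φ t - (if s < t then Tg s (φ (t - s)) else 0)
      - (if r < t then Tg (-r) (φ (t - r)) else 0)
      + (if s < t ∧ r < t - s then Tg (s - r) (φ (t - s - r)) else 0)

/-- The operators `D⁻ = f(∂_t - G)` and `D⁺ = f(∂_t + G)`, defined via Phillips' formula for a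
strongly continuous contraction group `T(t)` with generator `G` and a driftless Bernstein
function `f` with Lévy measure `ν`, commute on `H ∩ D`: for `φ` with `φ(0) = 0` such that all
the relevant Bochner integrals converge, `D⁻D⁺φ = D⁺D⁻φ`. -/
theorem Dplus_Dminus_commute
    {B : Type*} [NormedAddCommGroup B] [NormedSpace ℝ B] [CompleteSpace B]
    (Tg : ℝ → B →L[ℝ] B)
    (hTg0 : Tg 0 = ContinuousLinearMap.id ℝ B)
    (hTgadd : ∀ s t : ℝ, Tg (s + t) = (Tg s).comp (Tg t))
    (hTgcontr : ∀ (s : ℝ) (x : B), ‖Tg s x‖ ≤ ‖x‖)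
    (hTgcont : ∀ x : B, Continuous fun s : ℝ => Tg s x)
    (ν : Measure ℝ) [SigmaFinite ν]
    (hνint : ∫⁻ s in Set.Ioi (0:ℝ), ENNReal.ofReal (min s 1) ∂ν < ⊤)
    (φ : ℝ → B) (hφ0 : φ 0 = 0)
    -- `φ ∈ H ∩ D`: all relevant Bochner integrals converge
    (h1 : ∀ ε ∈ ({1, -1} : Set ℝ), ∀ t : ℝ, Integrable
      (fun s => φ t - if s < t then Tg (ε * s) (φ (t - s)) else Tg (ε * t) (φ 0))
      (ν.restrict (Set.Ioi 0)))
    (h2 : ∀ ε ∈ ({1, -1} : Set ℝ), ∀ t : ℝ, Integrable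
      (fun s => Dop Tg ν (-ε) φ t -
        if s < t then Tg (ε * s) (Dop Tg ν (-ε) φ (t - s)) else Tg (ε * t) (Dop Tg ν (-ε) φ 0))
      (ν.restrict (Set.Ioi 0)))
    (hfub : ∀ t : ℝ, Integrable
      (fun p : ℝ × ℝ =>
        φ t - (if p.1 < t then Tg p.1 (φ (t - p.1)) else Tg t (φ 0))
          - (if p.2 < t then Tg (-p.2) (φ (t - p.2)) else Tg (-t) (φ 0))
          + (if p.1 < t ∧ p.2 < t - p.1 then Tg (p.1 - p.2) (φ (t - p.1 - p.2))
             else if p.1 < t then Tg (t - 2 * p.2) (φ 0) else 0))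
      ((ν.restrict (Set.Ioi 0)).prod (ν.restrict (Set.Ioi 0)))) :
    ∀ t : ℝ, Dop Tg ν 1 (Dop Tg ν (-1) φ) t = Dop Tg ν (-1) (Dop Tg ν 1 φ) t := by
  intro t
  have hmul : ∀ (a b : ℝ) (x : B), Tg a (Tg b x) = Tg (a + b) x := by
    intro a b x; rw [hTgadd]; rfl
  -- Dop at time 0 vanishes
  have hD0 : ∀ ε : ℝ, Dop Tg ν ε φ 0 = 0 := by
    intro ε
    unfold Dop
    rw [setIntegral_congr_fun measurableSet_Ioi
      (g := fun _ : ℝ => (0 : B)) ?_, integral_zero]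
    intro s hs
    have : ¬ s < 0 := not_lt.mpr (le_of_lt hs)
    simp [this, hφ0]
  -- simplified representations of the inner operators
  have hψ : ∀ u : ℝ, Dop Tg ν (-1) φ u
      = ∫ r in Set.Ioi (0:ℝ), (φ u - if r < u then Tg (-r) (φ (u - r)) else 0) ∂ν := by
    intro u; unfold Dop; simp [hφ0]
  have hψ' : ∀ u : ℝ, Dop Tg ν 1 φ u
      = ∫ s in Set.Ioi (0:ℝ), (φ u - if s < u then Tg s (φ (u - s)) else 0) ∂ν := by
    intro u; unfold Dop; simp [hφ0]
  have hψint : ∀ u : ℝ, Integrable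
      (fun r => φ u - if r < u then Tg (-r) (φ (u - r)) else 0)
      (ν.restrict (Set.Ioi 0)) := by
    intro u
    have := h1 (-1) (by simp) u
    simpa [hφ0] using this
  have hψ'int : ∀ u : ℝ, Integrable
      (fun s => φ u - if s < u then Tg s (φ (u - s)) else 0)
      (ν.restrict (Set.Ioi 0)) := by
    intro u
    have := h1 1 (by simp) u
    simpa [hφ0] using this
  -- integrability of the kernel on the product space
  have hFint : Integrable (fun p : ℝ × ℝ => Fker Tg φ t p.1 p.2)
      ((ν.restrict (Set.Ioi 0)).prod (ν.restrict (Set.Ioi 0))) := by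
    have h := hfub t
    have heq : (fun p : ℝ × ℝ =>
        φ t - (if p.1 < t then Tg p.1 (φ (t - p.1)) else Tg t (φ 0))
          - (if p.2 < t then Tg (-p.2) (φ (t - p.2)) else Tg (-t) (φ 0))
          + (if p.1 < t ∧ p.2 < t - p.1 then Tg (p.1 - p.2) (φ (t - p.1 - p.2))
             else if p.1 < t then Tg (t - 2 * p.2) (φ 0) else 0))
        = fun p : ℝ × ℝ => Fker Tg φ t p.1 p.2 := by
      funext p; simp [Fker, hφ0]
    rwa [heq] at h
  -- LHS as an iterated integral of the kernel
  have hL : Dop Tg ν 1 (Dop Tg ν (-1) φ) t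
      = ∫ s in Set.Ioi (0:ℝ), (∫ r in Set.Ioi (0:ℝ), Fker Tg φ t s r ∂ν) ∂ν := by
    show (∫ s in Set.Ioi (0:ℝ), (Dop Tg ν (-1) φ t -
        if s < t then Tg (1 * s) (Dop Tg ν (-1) φ (t - s))
        else Tg (1 * t) (Dop Tg ν (-1) φ 0)) ∂ν) = _
    apply setIntegral_congr_fun measurableSet_Ioi
    intro s _
    rw [hD0 (-1)]
    simp only [one_mul, map_zero]
    by_cases hs : s < t
    · rw [if_pos hs, hψ t, hψ (t - s),
        ← ContinuousLinearMap.integral_comp_comm (Tg s) (hψint (t - s)),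
        ← integral_sub (hψint t) ((Tg s).integrable_comp (hψint (t - s)))]
      apply setIntegral_congr_fun measurableSet_Ioi
      intro r _
      dsimp only
      rw [map_sub, apply_ite (Tg s), map_zero, hmul, show s + -r = s - r by ring]
      by_cases hr : r < t - s
      · rw [if_pos hr, Fker,
          show (if s < t ∧ r < t - s then Tg (s - r) (φ (t - s - r)) else 0)
            = Tg (s - r) (φ (t - s - r)) from if_pos ⟨hs, hr⟩, if_pos hs]
        abel
      · rw [if_neg hr, Fker,
          show (if s < t ∧ r < t - s then Tg (s - r) (φ (t - s - r)) else 0)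
            = 0 from if_neg (fun h => hr h.2), if_pos hs]
        abel
    · rw [if_neg hs, sub_zero, hψ t]
      apply setIntegral_congr_fun measurableSet_Ioi
      intro r _
      dsimp only
      rw [Fker,
        show (if s < t ∧ r < t - s then Tg (s - r) (φ (t - s - r)) else 0)
          = 0 from if_neg (fun h => hs h.1), if_neg hs]
      abel
  -- RHS as an iterated integral of the kernel
  have hR : Dop Tg ν (-1) (Dop Tg ν 1 φ) t
      = ∫ r in Set.Ioi (0:ℝ), (∫ s in Set.Ioi (0:ℝ), Fker Tg φ t s r ∂ν) ∂ν := by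
    show (∫ r in Set.Ioi (0:ℝ), (Dop Tg ν 1 φ t -
        if r < t then Tg (-1 * r) (Dop Tg ν 1 φ (t - r))
        else Tg (-1 * t) (Dop Tg ν 1 φ 0)) ∂ν) = _
    apply setIntegral_congr_fun measurableSet_Ioi
    intro r hr0
    rw [hD0 1]
    simp only [neg_one_mul, map_zero]
    have hr0' : (0:ℝ) < r := hr0
    by_cases hr : r < t
    · rw [if_pos hr, hψ' t, hψ' (t - r),
        ← ContinuousLinearMap.integral_comp_comm (Tg (-r)) (hψ'int (t - r)),
        ← integral_sub (hψ'int t) ((Tg (-r)).integrable_comp (hψ'int (t - r)))]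
      apply setIntegral_congr_fun measurableSet_Ioi
      intro s hs0
      have hs0' : (0:ℝ) < s := hs0
      dsimp only
      rw [map_sub, apply_ite (Tg (-r)), map_zero, hmul, show -r + s = s - r by ring,
        show t - r - s = t - s - r by ring]
      by_cases hsr : s < t - r
      · rw [if_pos hsr, Fker,
          show (if s < t ∧ r < t - s then Tg (s - r) (φ (t - s - r)) else 0)
            = Tg (s - r) (φ (t - s - r)) from if_pos ⟨by linarith, by linarith⟩, if_pos hr]
        abel
      · rw [if_neg hsr, Fker,
          show (if s < t ∧ r < t - s then Tg (s - r) (φ (t - s - r)) else 0)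
            = 0 from if_neg (fun h => hsr (by linarith [h.1, h.2])), if_pos hr]
        abel
    · rw [if_neg hr, sub_zero, hψ' t]
      apply setIntegral_congr_fun measurableSet_Ioi
      intro s hs0
      have hs0' : (0:ℝ) < s := hs0
      dsimp only
      rw [Fker, if_neg hr,
        show (if s < t ∧ r < t - s then Tg (s - r) (φ (t - s - r)) else 0)
          = 0 from if_neg (fun h => hr (by linarith [h.1, h.2]))]
      abel
  rw [hL, hR]
  exact integral_integral_swap hFint
end

section
/- Let (J_i, v_i) be i.i.d. with v_i uniform on the unit sphere S^{d−1}, independent of J_i, and J_i Mittag-Leffler distributed with P(J > t) = E_α(−t^α), α ∈ (0,1). Then for λ ≥ 0 and ξ ∈ R^d, E[exp(n^{−1/α}(−λ τ_n + iξ·Y(n)))] → exp(−∫_{S^{d−1}} (λ − iξ·v)^α μ(dv)) as n → ∞, where τ_n = J_1+⋯+J_n, Y(n) = J_1 v_1 + ⋯ + J_n v_n and μ is the uniform probability measure on S^{d−1}. -/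
/-!
Conditioning on the direction `v`, the Mittag-Leffler Laplace transform evaluated at
`z = n^{-1/α} (λ - i⟪ξ, v⟫)` gives each summand the transform `∫ (1 + q v / n)⁻¹ dμ(v)` with
`q v = (λ - i⟪ξ, v⟫)^α`, and independence makes the transform at step `n` its `n`-th power.
Since `Re q ≥ 0` we have `‖(1 + q / n)⁻¹‖ ≤ 1`, so by dominated convergence
`n (∫ (1 + q / n)⁻¹ dμ - 1) = -∫ q (1 + q / n)⁻¹ dμ → -∫ q dμ`, and hence
`(∫ (1 + q / n)⁻¹ dμ)^n → exp (-∫ q dμ)`.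
-/

open MeasureTheory Filter ProbabilityTheory
open scoped RealInnerProductSpace Topology

namespace Complex

lemma ofReal_mul_cpow {r : ℝ} (hr : 0 < r) (w s : ℂ) :
    ((r : ℂ) * w) ^ s = (r : ℂ) ^ s * w ^ s := by
  rcases eq_or_ne w 0 with rfl | hw
  · rcases eq_or_ne s 0 with rfl | hs <;> simp [zero_cpow, *]
  have hr' : (r : ℂ) ≠ 0 := ofReal_ne_zero.mpr hr.ne'
  rw [cpow_def_of_ne_zero (mul_ne_zero hr' hw), log_ofReal_mul hr hw, cpow_def_of_ne_zero hr',
    cpow_def_of_ne_zero hw, ← ofReal_log hr.le, add_mul, exp_add]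

lemma ofReal_rpow_neg_inv_mul_cpow {n : ℕ} (hn : n ≠ 0) {α : ℝ} (hα : α ≠ 0) (z : ℂ) :
    ((((n : ℝ) ^ (-α⁻¹) : ℝ) : ℂ) * z) ^ (α : ℂ) = z ^ (α : ℂ) / n := by
  have hn' : (0 : ℝ) < n := Nat.cast_pos.mpr (Nat.pos_of_ne_zero hn)
  rw [ofReal_mul_cpow (Real.rpow_pos_of_pos hn' _), ← ofReal_cpow (Real.rpow_pos_of_pos hn' _).le,
    ← Real.rpow_mul hn'.le, neg_mul, inv_mul_cancel₀ hα, Real.rpow_neg_one, div_eq_inv_mul]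
  push_cast
  rfl

lemma re_cpow_ofReal_nonneg {w : ℂ} (hw : 0 ≤ w.re) {a : ℝ} (ha₀ : 0 ≤ a) (ha₁ : a ≤ 1) :
    0 ≤ (w ^ (a : ℂ)).re := by
  rcases eq_or_ne w 0 with rfl | hw₀
  · rcases eq_or_ne (a : ℂ) 0 with h | h <;> simp [zero_cpow, h]
  rw [cpow_def_of_ne_zero hw₀, exp_re]
  refine mul_nonneg (Real.exp_pos _).le (Real.cos_nonneg_of_mem_Icc (abs_le.mp ?_))
  have harg : |w.arg| ≤ Real.pi / 2 := abs_arg_le_pi_div_two_iff.mpr hw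
  calc |(log w * a).im| = |w.arg| * a := by simp [log_im, abs_mul, abs_of_nonneg ha₀]
    _ ≤ Real.pi / 2 * 1 := by gcongr
    _ = Real.pi / 2 := mul_one _

lemma norm_inv_one_add_le_one {z : ℂ} (hz : 0 ≤ z.re) : ‖(1 + z)⁻¹‖ ≤ 1 := by
  rw [norm_inv]
  refine inv_le_one_of_one_le₀ ((le_abs_self _).trans' ?_ |>.trans (abs_re_le_norm _))
  simpa using hz

lemma norm_exp_neg_mul_ofReal_le_one {z : ℂ} (hz : 0 ≤ z.re) {t : ℝ} (ht : 0 ≤ t) :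
    ‖exp (-z * t)‖ ≤ 1 := by
  rw [norm_exp, Real.exp_le_one_iff]
  simpa using mul_nonneg hz ht

end Complex

theorem tendsto_integral_inv_one_add_div_pow {X : Type*} [MeasurableSpace X] {μ : Measure X}
    [IsProbabilityMeasure μ] {q : X → ℂ} (hq : Integrable q μ) (hq_re : ∀ x, 0 ≤ (q x).re) :
    Tendsto (fun n : ℕ => (∫ x, (1 + q x / n)⁻¹ ∂μ) ^ n) atTop
      (𝓝 (Complex.exp (-∫ x, q x ∂μ))) := by
  have hre : ∀ (n : ℕ) x, 0 ≤ (q x / n).re := fun n x => by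
    rw [Complex.div_natCast_re]; exact div_nonneg (hq_re x) n.cast_nonneg
  have hmeas : ∀ n : ℕ, AEStronglyMeasurable (fun x => (1 + q x / n)⁻¹) μ := fun n =>
    ((hq.aemeasurable.div_const _).const_add 1).inv.aestronglyMeasurable
  have hint : ∀ n : ℕ, Integrable (fun x => (1 + q x / n)⁻¹) μ := fun n =>
    .of_bound (hmeas n) 1 (.of_forall fun x => Complex.norm_inv_one_add_le_one (hre n x))
  have hlim : Tendsto (fun n : ℕ => ∫ x, -q x * (1 + q x / n)⁻¹ ∂μ) atTop
      (𝓝 (-∫ x, q x ∂μ)) := by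
    rw [← integral_neg]
    refine tendsto_integral_of_dominated_convergence (fun x => ‖q x‖)
      (fun n => hq.aestronglyMeasurable.neg.mul (hmeas n)) hq.norm
      (fun n => .of_forall fun x => ?_) (.of_forall fun x => ?_)
    · rw [norm_mul, norm_neg]
      exact mul_le_of_le_one_right (norm_nonneg _) (Complex.norm_inv_one_add_le_one (hre n x))
    · have h := tendsto_const_div_atTop_nhds_zero_nat (q x)
      simpa using (tendsto_const_nhds (x := -q x)).mul ((h.const_add 1).inv₀ (by simp))
  refine (Complex.tendsto_one_add_pow_exp_of_tendsto
    (g := fun n : ℕ => ∫ x, (1 + q x / n)⁻¹ ∂μ - 1) (hlim.congr' ?_)).congr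
      fun n => by rw [add_sub_cancel]
  filter_upwards [eventually_ne_atTop 0] with n hn
  have hn' : (n : ℂ) ≠ 0 := Nat.cast_ne_zero.mpr hn
  have hne : ∀ x, 1 + q x / n ≠ 0 := fun x h => by
    have := hre n x
    rw [show q x / n = -1 by linear_combination h] at this
    norm_num at this
  calc ∫ x, -q x * (1 + q x / n)⁻¹ ∂μ = ∫ x, ((n : ℂ) * (1 + q x / n)⁻¹ - n) ∂μ := by
        refine integral_congr_ae (.of_forall fun x => ?_)
        linear_combination (-(n : ℂ)) * mul_inv_cancel₀ (hne x) +
          (q x * (1 + q x / n)⁻¹) * mul_inv_cancel₀ hn'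
    _ = n * (∫ x, (1 + q x / n)⁻¹ ∂μ - 1) := by
        rw [integral_sub ((hint n).const_mul _) (integrable_const _), integral_const_mul,
          integral_const]
        simp [mul_sub]

namespace ProbabilityTheory

variable {Ω β : Type*} [MeasurableSpace Ω] [MeasurableSpace β] {P : Measure Ω}

theorem iIndepFun.integral_finset_prod_comp {ι 𝕜 : Type*} [RCLike 𝕜] {X : ι → Ω → β}
    (hX : iIndepFun X P) (mX : ∀ i, Measurable (X i)) {f : β → 𝕜} (hf : StronglyMeasurable f)
    (s : Finset ι) : ∫ ω, ∏ i ∈ s, f (X i ω) ∂P = ∏ i ∈ s, ∫ ω, f (X i ω) ∂P := by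
  have h := (hX.precomp (g := ((↑) : s → ι)) Subtype.val_injective).integral_fun_prod_comp
    (fun i => (mX i.1).aemeasurable) fun _ => hf.aestronglyMeasurable
  rw [Finset.prod_coe_sort s (fun i => ∫ ω, f (X i ω) ∂P)] at h
  refine Eq.trans ?_ h
  congr 1 with ω
  exact (Finset.prod_coe_sort s fun i => f (X i ω)).symm

theorem IndepFun.integral_comp_eq_integral_integral_map {α E : Type*} [MeasurableSpace α]
    [NormedAddCommGroup E] [NormedSpace ℝ E] [IsFiniteMeasure P] {X : Ω → α} {Y : Ω → β}
    (hXY : IndepFun X Y P) (hX : Measurable X) (hY : Measurable Y) {f : α × β → E}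
    (hf : StronglyMeasurable f) (hfi : Integrable (fun ω => f (X ω, Y ω)) P) :
    ∫ ω, f (X ω, Y ω) ∂P = ∫ y, ∫ ω, f (X ω, y) ∂P ∂(P.map Y) := by
  have hXY' : Measurable fun ω => (X ω, Y ω) := hX.prodMk hY
  have hmap : P.map (fun ω => (X ω, Y ω)) = (P.map X).prod (P.map Y) :=
    (indepFun_iff_map_prod_eq_prod_map_map hX.aemeasurable hY.aemeasurable).mp hXY
  have hfi' : Integrable f ((P.map X).prod (P.map Y)) := by
    rw [← hmap]
    exact (integrable_map_measure hf.aestronglyMeasurable hXY'.aemeasurable).mpr hfi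
  calc ∫ ω, f (X ω, Y ω) ∂P = ∫ p, f p ∂((P.map X).prod (P.map Y)) := by
        rw [← hmap, integral_map hXY'.aemeasurable hf.aestronglyMeasurable]
    _ = ∫ y, ∫ x, f (x, y) ∂(P.map X) ∂(P.map Y) := integral_prod_symm f hfi'
    _ = ∫ y, ∫ ω, f (X ω, y) ∂P ∂(P.map Y) := by
        refine integral_congr_ae (.of_forall fun y => integral_map hX.aemeasurable ?_)
        exact (hf.comp_measurable (measurable_id.prodMk measurable_const)).aestronglyMeasurable

theorem integral_cexp_neg_mul_eq_integral_integral_map [IsFiniteMeasure P] {J : Ω → ℝ}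
    {V : Ω → β} (hJV : IndepFun J V P) (hJ : Measurable J) (hV : Measurable V)
    (hJ₀ : ∀ ω, 0 ≤ J ω) {W : β → ℂ} (hW : Measurable W) (hW_re : ∀ v, 0 ≤ (W v).re) :
    ∫ ω, Complex.exp (-W (V ω) * J ω) ∂P =
      ∫ v, ∫ ω, Complex.exp (-W v * J ω) ∂P ∂(P.map V) := by
  have hf : Measurable fun p : ℝ × β => Complex.exp (-W p.2 * p.1) := by fun_prop
  refine hJV.integral_comp_eq_integral_integral_map hJ hV hf.stronglyMeasurable ?_
  refine .of_bound (hf.comp (hJ.prodMk hV)).aestronglyMeasurable 1 (.of_forall fun ω => ?_)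
  exact Complex.norm_exp_neg_mul_ofReal_le_one (hW_re _) (hJ₀ ω)

theorem integral_prod_cexp_neg_mul_eq_pow {J : ℕ → Ω → ℝ} {V : ℕ → Ω → β}
    (hJ : ∀ i, Measurable (J i)) (hV : ∀ i, Measurable (V i)) (hJ₀ : ∀ i ω, 0 ≤ J i ω)
    (hiid : iIndepFun (fun i ω => (J i ω, V i ω)) P) (hJV : ∀ i, IndepFun (J i) (V i) P)
    {μ : Measure β} (hV_map : ∀ i, P.map (V i) = μ) {L : ℂ → ℂ}
    (hL : ∀ i z, 0 ≤ z.re → ∫ ω, Complex.exp (-z * J i ω) ∂P = L z)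
    {W : β → ℂ} (hW : Measurable W) (hW_re : ∀ v, 0 ≤ (W v).re) (n : ℕ) :
    ∫ ω, ∏ i ∈ Finset.range n, Complex.exp (-W (V i ω) * J i ω) ∂P =
      (∫ v, L (W v) ∂μ) ^ n := by
  have := hiid.isProbabilityMeasure
  have hf : Measurable fun p : ℝ × β => Complex.exp (-W p.2 * p.1) := by fun_prop
  rw [hiid.integral_finset_prod_comp (fun i => (hJ i).prodMk (hV i)) hf.stronglyMeasurable,
    Finset.prod_eq_pow_card fun i _ => ?_, Finset.card_range]
  rw [integral_cexp_neg_mul_eq_integral_integral_map (hJV i) (hJ i) (hV i) (hJ₀ i) hW hW_re,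
    hV_map i]
  exact integral_congr_ae (.of_forall fun v => hL i (W v) (hW_re v))

end ProbabilityTheory

section InnerProductSpace

variable {E : Type*} [NormedAddCommGroup E] [InnerProductSpace ℝ E]

lemma cexp_ofReal_mul_sum_eq_prod {ι : Type*} (c lam : ℝ) (ξ : E) (s : Finset ι) (J : ι → ℝ)
    (V : ι → E) :
    Complex.exp ((c : ℂ) * (-(lam : ℂ) * ((∑ i ∈ s, J i : ℝ) : ℂ) +
        Complex.I * ((⟪ξ, ∑ i ∈ s, J i • V i⟫ : ℝ) : ℂ))) =
      ∏ i ∈ s, Complex.exp (-((c : ℂ) * ((lam : ℂ) - Complex.I * ((⟪ξ, V i⟫ : ℝ) : ℂ))) * J i) := by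
  rw [← Complex.exp_sum, inner_sum]
  simp only [real_inner_smul_right]
  push_cast
  rw [Finset.mul_sum, Finset.mul_sum, ← Finset.sum_add_distrib, Finset.mul_sum]
  exact congrArg _ (Finset.sum_congr rfl fun i _ => by ring)

variable [MeasurableSpace E] [OpensMeasurableSpace E]

lemma integrable_sub_I_mul_inner_cpow {μ : Measure E} [IsFiniteMeasure μ]
    (hμ : ∀ᵐ v ∂μ, ‖v‖ ≤ 1) (ξ : E) (lam : ℝ) {α : ℝ} (hα : 0 ≤ α) :
    Integrable (fun v => ((lam : ℂ) - Complex.I * ((⟪ξ, v⟫ : ℝ) : ℂ)) ^ (α : ℂ)) μ := by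
  have hmeas : Measurable fun v : E => (lam : ℂ) - Complex.I * ((⟪ξ, v⟫ : ℝ) : ℂ) := by fun_prop
  refine .of_bound (hmeas.pow_const _).aestronglyMeasurable ((|lam| + ‖ξ‖) ^ α)
    (hμ.mono fun v hv => ?_)
  rw [Complex.norm_cpow_real]
  refine Real.rpow_le_rpow (norm_nonneg _) ((norm_sub_le _ _).trans ?_) hα
  rw [norm_mul, Complex.norm_I, one_mul, Complex.norm_real, Complex.norm_real, Real.norm_eq_abs,
    Real.norm_eq_abs]
  gcongr
  exact (abs_real_inner_le_norm ξ v).trans (mul_le_of_le_one_right (norm_nonneg ξ) hv)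

end InnerProductSpace

theorem coupled_ctrw_fourier_laplace_limit_general
    {d : ℕ}
    {Ω : Type*} [MeasurableSpace Ω] (P : Measure Ω) [IsProbabilityMeasure P]
    (α : ℝ) (hα : α ∈ Set.Ioo (0:ℝ) 1)
    (J : ℕ → Ω → ℝ) (V : ℕ → Ω → EuclideanSpace ℝ (Fin d))
    (μ : Measure (EuclideanSpace ℝ (Fin d))) [IsProbabilityMeasure μ]
    -- `μ` is supported on the unit sphere
    (hμsphere : ∀ᵐ v ∂μ, ‖v‖ = 1)
    (hJmeas : ∀ i, Measurable (J i)) (hVmeas : ∀ i, Measurable (V i))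
    (hJnonneg : ∀ i ω, 0 ≤ J i ω)
    -- the pairs `(J_i, v_i)` are i.i.d.
    (hiid : iIndepFun (fun i ω => (J i ω, V i ω)) P)
    -- `v_i` is uniform on the sphere, independent of `J_i`
    (hVdist : ∀ i, Measure.map (V i) P = μ)
    (hJV : ∀ i, IndepFun (J i) (V i) P)
    -- `J_i` is Mittag-Leffler: `E[e^{-zJ}] = 1/(1+z^α)` for `Re z ≥ 0`
    (hJlap : ∀ i, ∀ z : ℂ, 0 ≤ z.re →
      ∫ ω, Complex.exp (-z * (J i ω : ℂ)) ∂P = 1 / (1 + z ^ (α : ℂ))) :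
    ∀ (ξ : EuclideanSpace ℝ (Fin d)) (lam : ℝ), 0 ≤ lam →
      Tendsto (fun n : ℕ =>
          ∫ ω, Complex.exp ((((n : ℝ) ^ (-α⁻¹) : ℝ) : ℂ) *
            (-(lam : ℂ) * ((∑ i ∈ Finset.range n, J i ω : ℝ) : ℂ) +
              Complex.I *
                ((⟪ξ, ∑ i ∈ Finset.range n, J i ω • V i ω⟫ : ℝ) : ℂ))) ∂P)
        atTop
        (nhds (Complex.exp
          (-∫ v, ((lam : ℂ) - Complex.I * ((⟪ξ, v⟫ : ℝ) : ℂ)) ^ (α : ℂ) ∂μ))) := by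
  intro ξ lam hlam
  set w : EuclideanSpace ℝ (Fin d) → ℂ := fun v => (lam : ℂ) - Complex.I * ((⟪ξ, v⟫ : ℝ) : ℂ)
  have hw_re : ∀ v, 0 ≤ (w v).re := fun v => by simpa [w] using hlam
  refine (tendsto_integral_inv_one_add_div_pow
    (integrable_sub_I_mul_inner_cpow (hμsphere.mono fun v hv => hv.le) ξ lam hα.1.le)
    fun v => Complex.re_cpow_ofReal_nonneg (hw_re v) hα.1.le hα.2.le).congr' ?_
  filter_upwards [eventually_ne_atTop 0] with n hn
  have hc : 0 ≤ (n : ℝ) ^ (-α⁻¹) := by positivity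
  simp_rw [cexp_ofReal_mul_sum_eq_prod]
  rw [integral_prod_cexp_neg_mul_eq_pow hJmeas hVmeas hJnonneg hiid hJV hVdist hJlap
    (W := fun v => (((n : ℝ) ^ (-α⁻¹) : ℝ) : ℂ) * w v) (by fun_prop)
    (fun v => by simpa [Complex.re_ofReal_mul] using mul_nonneg hc (hw_re v))]
  simp_rw [Complex.ofReal_rpow_neg_inv_mul_cpow hn hα.1.ne', one_div]
  rfl

/-- Let `(J_i, v_i)` be i.i.d., with `v_i` uniform on the unit sphere `S^{d-1}` and independent
of `J_i`, and `J_i` Mittag-Leffler distributed (`E[e^{-zJ}] = 1/(1+z^α)` for `Re z ≥ 0`,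
`α ∈ (0,1)`).  Then for `λ ≥ 0` and `ξ ∈ ℝ^d`,
`E[exp(n^{-1/α}(-λτ_n + iξ·Y(n)))] → exp(-∫_{S^{d-1}} (λ - iξ·v)^α μ(dv))` as `n → ∞`,
where `τ_n = J_1 + ⋯ + J_n` and `Y(n) = J_1 v_1 + ⋯ + J_n v_n`. -/
theorem coupled_ctrw_fourier_laplace_limit
    {d : ℕ} (hd : 0 < d)
    {Ω : Type*} [MeasurableSpace Ω] (P : Measure Ω) [IsProbabilityMeasure P]
    (α : ℝ) (hα : α ∈ Set.Ioo (0:ℝ) 1)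
    (J : ℕ → Ω → ℝ) (V : ℕ → Ω → EuclideanSpace ℝ (Fin d))
    (μ : Measure (EuclideanSpace ℝ (Fin d))) [IsProbabilityMeasure μ]
    -- `μ` is supported on the unit sphere
    (hμsphere : ∀ᵐ v ∂μ, ‖v‖ = 1)
    (hJmeas : ∀ i, Measurable (J i)) (hVmeas : ∀ i, Measurable (V i))
    (hJnonneg : ∀ i ω, 0 ≤ J i ω)
    -- the pairs `(J_i, v_i)` are i.i.d.
    (hiid : iIndepFun (fun i ω => (J i ω, V i ω)) P)
    (hident : ∀ i, Measure.map (fun ω => (J i ω, V i ω)) P =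
      Measure.map (fun ω => (J 0 ω, V 0 ω)) P)
    -- `v_i` is uniform on the sphere, independent of `J_i`
    (hVdist : ∀ i, Measure.map (V i) P = μ)
    (hJV : ∀ i, IndepFun (J i) (V i) P)
    -- `J_i` is Mittag-Leffler: `E[e^{-zJ}] = 1/(1+z^α)` for `Re z ≥ 0`
    (hJlap : ∀ i, ∀ z : ℂ, 0 ≤ z.re →
      ∫ ω, Complex.exp (-z * (J i ω : ℂ)) ∂P = 1 / (1 + z ^ (α : ℂ))) :
    ∀ (ξ : EuclideanSpace ℝ (Fin d)) (lam : ℝ), 0 ≤ lam →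
      Tendsto (fun n : ℕ =>
          ∫ ω, Complex.exp ((((n : ℝ) ^ (-α⁻¹) : ℝ) : ℂ) *
            (-(lam : ℂ) * ((∑ i ∈ Finset.range n, J i ω : ℝ) : ℂ) +
              Complex.I *
                ((⟪ξ, ∑ i ∈ Finset.range n, J i ω • V i ω⟫ : ℝ) : ℂ))) ∂P)
        atTop
        (nhds (Complex.exp
          (-∫ v, ((lam : ℂ) - Complex.I * ((⟪ξ, v⟫ : ℝ) : ℂ)) ^ (α : ℂ) ∂μ))) :=
  coupled_ctrw_fourier_laplace_limit_general P α hα J V μ hμsphere hJmeas hVmeas hJnonneg hiid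
    hVdist hJV hJlap
end
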